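/- arXiv:2012.06220 — 2 statements merged into one kernel-verified Lean document; each statement's English description precedes it below -/
import Mathlib

section
/- For Re(z) > 0, the function log G(z) has the representation log G(z) = -∫₁^∞ g(u) u^{-z-1} du, where g(u) = ∑_{n=1}^∞ (1/n) χ^{*n}(u), χ is the indicator function of [e, e²], and * denotes multiplicative convolution (f*h)(x) = ∫₁^x f(x/u) h(u) du/u. -/
open Complex

/-- Multiplicative convolution of functions supported on `[1,∞)`:
`(f*h)(x) = ∫₁^x f(x/u) h(u) du/u`. -/
noncomputable def mconv (f h : ℝ → ℝ) : ℝ → ℝ := fun x => ∫ u in (1:ℝ)..x, f (x / u) * h u / u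

/-- `χ`, the indicator function of `[e, e²]`. -/
noncomputable def chi : ℝ → ℝ := Set.indicator (Set.Icc (Real.exp 1) (Real.exp 2)) 1

/-- `chiPow n = χ^{*(n+1)}`, the `(n+1)`-fold multiplicative convolution of `χ`. -/
noncomputable def chiPow : ℕ → (ℝ → ℝ)
  | 0 => chi
  | n + 1 => mconv (chiPow n) chi

/-- `g(u) = ∑_{n≥1} χ^{*n}(u)/n`. -/
noncomputable def g (u : ℝ) : ℝ := ∑' n : ℕ, chiPow n u / (n + 1)

/-!
Write `F(z) = (e^{-z} - e^{-2z})/z = ∫₁^∞ χ(u) u^{-z-1} du`, so that `G = 1 - F`. The transform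
`f ↦ ∫₁^∞ f(u) u^{-z-1} du` turns multiplicative convolution into multiplication (Fubini and the
substitution `x = uv`), hence `χ^{*n}` is sent to `F(z)^n`. Since `χ^{*n} ≥ 0`, the norms are
controlled by the real point: `|F(z)| ≤ F(Re z) < 1`, and `∑ F(Re z)^n / n` converges. This
justifies integrating `g = ∑ χ^{*n}/n` term by term, giving `∑ F(z)^n / n = -log (1 - F(z))`.
-/

open MeasureTheory Set

noncomputable def mellinFromOne (f : ℝ → ℝ) (z : ℂ) : ℂ :=
  ∫ u in Ioi (1:ℝ), (f u : ℂ) * (u : ℂ) ^ (-z - 1)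

section MulConv

variable {f h : ℝ → ℝ}

lemma mconv_eq_setIntegral_Ioi (hf : ∀ t ≤ 1, f t = 0) (hh : ∀ t ≤ 1, h t = 0) (x : ℝ) :
    mconv f h x = ∫ u in Ioi 1, f (x / u) * h u / u := by
  have hvanish : ∀ u ∈ Ioi (1:ℝ) \ Ioc 1 x, f (x / u) * h u / u = 0 := by
    rintro u ⟨hu1, hux⟩
    have hxu : x < u := lt_of_not_ge fun hux' => hux ⟨hu1, hux'⟩
    rw [hf _ ((div_lt_one (zero_lt_one.trans hu1)).mpr hxu).le, zero_mul, zero_div]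
  rw [setIntegral_eq_of_subset_of_forall_sdiff_eq_zero measurableSet_Ioi Ioc_subset_Ioi_self
    hvanish]
  rcases le_total 1 x with hx | hx
  · exact intervalIntegral.integral_of_le hx
  · rw [mconv, intervalIntegral.integral_of_ge hx, Ioc_eq_empty (not_lt.mpr hx),
      setIntegral_empty, neg_eq_zero]
    refine setIntegral_eq_zero_of_forall_eq_zero fun u hu => ?_
    rw [hh u hu.2, mul_zero, zero_div]

lemma mconv_eq_zero_of_le_one (hf : ∀ t ≤ 1, f t = 0) (hh : ∀ t ≤ 1, h t = 0) {x : ℝ}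
    (hx : x ≤ 1) : mconv f h x = 0 := by
  rw [mconv_eq_setIntegral_Ioi hf hh]
  refine setIntegral_eq_zero_of_forall_eq_zero fun u hu => ?_
  rw [hf _ ((div_lt_one (zero_lt_one.trans hu)).mpr (hx.trans_lt hu)).le, zero_mul, zero_div]

lemma measurable_mconv (hfm : Measurable f) (hf : ∀ t ≤ 1, f t = 0) (hhm : Measurable h)
    (hh : ∀ t ≤ 1, h t = 0) : Measurable (mconv f h) := by
  have hker : StronglyMeasurable fun p : ℝ × ℝ => f (p.1 / p.2) * h p.2 / p.2 :=
    (((hfm.comp (measurable_fst.div measurable_snd)).mul (hhm.comp measurable_snd)).div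
      measurable_snd).stronglyMeasurable
  rw [funext (mconv_eq_setIntegral_Ioi hf hh)]
  exact (hker.integral_prod_right' (ν := volume.restrict (Ioi 1))).measurable

lemma mconv_nonneg (hf0 : ∀ t, 0 ≤ f t) (hf : ∀ t ≤ 1, f t = 0) (hh0 : ∀ t, 0 ≤ h t)
    (hh : ∀ t ≤ 1, h t = 0) (x : ℝ) : 0 ≤ mconv f h x := by
  rw [mconv_eq_setIntegral_Ioi hf hh]
  exact setIntegral_nonneg measurableSet_Ioi fun u hu =>
    div_nonneg (mul_nonneg (hf0 _) (hh0 u)) (zero_lt_one.trans hu).le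

lemma abs_mconv_le {C : ℝ} (hfC : ∀ t, |f t| ≤ C) (hf : ∀ t ≤ 1, f t = 0) (hh0 : ∀ t, 0 ≤ h t)
    (hhi : IntegrableOn (fun u => h u / u) (Ioi 1)) (hh : ∀ t ≤ 1, h t = 0) (x : ℝ) :
    |mconv f h x| ≤ C * ∫ u in Ioi 1, h u / u := by
  rw [mconv_eq_setIntegral_Ioi hf hh, ← integral_const_mul C, ← Real.norm_eq_abs]
  refine norm_integral_le_of_norm_le (hhi.const_mul C) ?_
  filter_upwards [ae_restrict_mem measurableSet_Ioi] with u hu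
  have hu0 : 0 < u := zero_lt_one.trans hu
  rw [Real.norm_eq_abs, abs_div, abs_mul, abs_of_nonneg (hh0 u), abs_of_pos hu0, mul_div_assoc]
  exact mul_le_mul_of_nonneg_right (hfC _) (div_nonneg (hh0 u) hu0.le)

end MulConv

section Mellin

variable {f h : ℝ → ℝ} {z : ℂ}

lemma norm_ofReal_mul_cpow {u : ℝ} (hu : 0 < u) (a : ℝ) :
    ‖(a : ℂ) * (u : ℂ) ^ (-z - 1)‖ = |a| * u ^ (-z.re - 1) := by
  rw [norm_mul, norm_real, Real.norm_eq_abs, norm_cpow_eq_rpow_re_of_pos hu]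
  simp

lemma integrableOn_mellinFromOne_integrand {C : ℝ} (hfm : Measurable f) (hfC : ∀ t, |f t| ≤ C)
    (hz : 0 < z.re) : IntegrableOn (fun u : ℝ => (f u : ℂ) * (u : ℂ) ^ (-z - 1)) (Ioi 1) := by
  refine ((integrableOn_Ioi_rpow_of_lt (by linarith : -z.re - 1 < -1) one_pos).const_mul C).mono'
    ((measurable_ofReal.comp hfm).mul (measurable_ofReal.pow_const _)).aestronglyMeasurable ?_
  filter_upwards [ae_restrict_mem measurableSet_Ioi] with u hu
  have hu0 : 0 < u := zero_lt_one.trans hu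
  rw [norm_ofReal_mul_cpow hu0]
  exact mul_le_mul_of_nonneg_right (hfC u) (Real.rpow_nonneg hu0.le _)

lemma mellinFromOne_ofReal (x : ℝ) :
    mellinFromOne f x = ((∫ u in Ioi 1, f u * u ^ (-x - 1) : ℝ) : ℂ) := by
  rw [mellinFromOne, ← integral_complex_ofReal]
  refine setIntegral_congr_fun measurableSet_Ioi fun u hu => ?_
  rw [ofReal_mul, ofReal_cpow (zero_lt_one.trans hu).le]
  push_cast
  rfl

lemma integral_norm_mellinFromOne_integrand (hf0 : ∀ t, 0 ≤ f t) :
    ∫ u in Ioi 1, ‖(f u : ℂ) * (u : ℂ) ^ (-z - 1)‖ = ‖mellinFromOne f z.re‖ := by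
  rw [mellinFromOne_ofReal, norm_real, Real.norm_of_nonneg (setIntegral_nonneg measurableSet_Ioi
    fun u hu => mul_nonneg (hf0 u) (Real.rpow_nonneg (zero_lt_one.trans hu).le _))]
  refine setIntegral_congr_fun measurableSet_Ioi fun u hu => ?_
  rw [norm_ofReal_mul_cpow (zero_lt_one.trans hu), abs_of_nonneg (hf0 u)]

lemma norm_mellinFromOne_le (hf0 : ∀ t, 0 ≤ f t) :
    ‖mellinFromOne f z‖ ≤ ‖mellinFromOne f z.re‖ :=
  (norm_integral_le_integral_norm _).trans_eq (integral_norm_mellinFromOne_integrand hf0)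

lemma mellinFromOne_div_const (c : ℝ) :
    mellinFromOne (fun u => f u / c) z = mellinFromOne f z / c := by
  rw [mellinFromOne, mellinFromOne, ← integral_div]
  congr 1
  funext u
  push_cast
  ring

lemma hasSum_mellinFromOne {ι : Type*} [Countable ι] {F : ι → ℝ → ℝ} (hF0 : ∀ i t, 0 ≤ F i t)
    (hint : ∀ i, IntegrableOn (fun u : ℝ => (F i u : ℂ) * (u : ℂ) ^ (-z - 1)) (Ioi 1))
    (hsum : Summable fun i => ‖mellinFromOne (F i) z.re‖) :
    HasSum (fun i => mellinFromOne (F i) z) (mellinFromOne (fun u => ∑' i, F i u) z) := by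
  have hsum' : Summable fun i => ∫ u in Ioi 1, ‖(F i u : ℂ) * (u : ℂ) ^ (-z - 1)‖ := by
    simpa only [integral_norm_mellinFromOne_integrand (hF0 _)] using hsum
  have hpull : ∀ u : ℝ, ((∑' i, F i u : ℝ) : ℂ) * (u : ℂ) ^ (-z - 1)
      = ∑' i, (F i u : ℂ) * (u : ℂ) ^ (-z - 1) := fun u => by
    rw [ofReal_tsum, tsum_mul_right]
  simpa only [mellinFromOne, hpull] using hasSum_integral_of_summable_integral_norm hint hsum'

lemma setIntegral_comp_div_mul_cpow (hf : ∀ t ≤ 1, f t = 0) {u : ℝ} (hu : 1 < u) :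
    ∫ x in Ioi 1, (f (x / u) : ℂ) * (x : ℂ) ^ (-z - 1) = (u : ℂ) ^ (-z) * mellinFromOne f z := by
  have hu0 : 0 < u := zero_lt_one.trans hu
  have huC : (u : ℂ) ≠ 0 := ofReal_ne_zero.mpr hu0.ne'
  have hsubst := integral_comp_mul_left_Ioi'
    (fun x : ℝ => (f (x / u) : ℂ) * (x : ℂ) ^ (-z - 1)) u⁻¹ hu0
  rw [mul_inv_cancel₀ hu0.ne'] at hsubst
  have hvanish : ∀ v ∈ Ioi u⁻¹ \ Ioi 1,
      (f (u * v / u) : ℂ) * ((u * v : ℝ) : ℂ) ^ (-z - 1) = 0 := fun v hv => by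
    rw [mul_div_cancel_left₀ v hu0.ne', hf v (not_lt.mp hv.2), ofReal_zero, zero_mul]
  have hscale : ∀ v ∈ Ioi (1:ℝ), (f (u * v / u) : ℂ) * ((u * v : ℝ) : ℂ) ^ (-z - 1)
      = (u : ℂ) ^ (-z - 1) * ((f v : ℂ) * (v : ℂ) ^ (-z - 1)) := fun v hv => by
    rw [mul_div_cancel_left₀ v hu0.ne', ofReal_mul,
      mul_cpow_ofReal_nonneg hu0.le (zero_lt_one.trans hv).le]
    ring
  rw [← hsubst, setIntegral_eq_of_subset_of_forall_sdiff_eq_zero measurableSet_Ioi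
    (Ioi_subset_Ioi (inv_le_one_of_one_le₀ hu.le : u⁻¹ ≤ 1)) hvanish,
    setIntegral_congr_fun measurableSet_Ioi hscale, integral_const_mul, real_smul,
    ← mul_assoc, mellinFromOne, cpow_sub _ _ huC, cpow_one]
  field_simp

lemma integrable_mconv_kernel {C : ℝ} (hfm : Measurable f) (hfC : ∀ t, |f t| ≤ C)
    (hhm : Measurable h) (hhi : IntegrableOn (fun u => h u / u) (Ioi 1)) (hz : 0 < z.re) :
    Integrable
      (Function.uncurry fun x u : ℝ => ((f (x / u) * h u / u : ℝ) : ℂ) * (x : ℂ) ^ (-z - 1))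
      ((volume.restrict (Ioi 1)).prod (volume.restrict (Ioi 1))) := by
  have hbound := ((integrableOn_Ioi_rpow_of_lt (by linarith : -z.re - 1 < -1) one_pos).const_mul
    C).mul_prod hhi.norm
  refine hbound.mono' ?_ ?_
  · exact ((measurable_ofReal.comp (((hfm.comp (measurable_fst.div measurable_snd)).mul
      (hhm.comp measurable_snd)).div measurable_snd)).mul
      ((measurable_ofReal.comp measurable_fst).pow_const _)).aestronglyMeasurable
  rw [Measure.prod_restrict]
  filter_upwards [ae_restrict_mem (measurableSet_Ioi.prod measurableSet_Ioi)] with p hp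
  have hx0 : 0 < p.1 := zero_lt_one.trans hp.1
  change ‖((f (p.1 / p.2) * h p.2 / p.2 : ℝ) : ℂ) * (p.1 : ℂ) ^ (-z - 1)‖ ≤ _
  rw [norm_ofReal_mul_cpow hx0, mul_div_assoc, abs_mul, ← Real.norm_eq_abs (h p.2 / p.2),
    mul_right_comm]
  gcongr
  exact hfC _

theorem mellinFromOne_mconv {C : ℝ} (hfm : Measurable f) (hfC : ∀ t, |f t| ≤ C)
    (hf : ∀ t ≤ 1, f t = 0) (hhm : Measurable h) (hhi : IntegrableOn (fun u => h u / u) (Ioi 1))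
    (hh : ∀ t ≤ 1, h t = 0) (hz : 0 < z.re) :
    mellinFromOne (mconv f h) z = mellinFromOne h z * mellinFromOne f z := by
  have hinner : ∀ u ∈ Ioi (1:ℝ),
      ∫ x in Ioi 1, ((f (x / u) * h u / u : ℝ) : ℂ) * (x : ℂ) ^ (-z - 1)
        = (h u : ℂ) * (u : ℂ) ^ (-z - 1) * mellinFromOne f z := fun u hu => by
    have huC : (u : ℂ) ≠ 0 := ofReal_ne_zero.mpr (zero_lt_one.trans hu).ne'
    calc ∫ x in Ioi 1, ((f (x / u) * h u / u : ℝ) : ℂ) * (x : ℂ) ^ (-z - 1)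
        = (h u / u : ℂ) * ∫ x in Ioi 1, (f (x / u) : ℂ) * (x : ℂ) ^ (-z - 1) := by
          rw [← integral_const_mul]
          congr 1 with x
          push_cast
          ring
      _ = (h u : ℂ) * (u : ℂ) ^ (-z - 1) * mellinFromOne f z := by
          rw [setIntegral_comp_div_mul_cpow hf hu, cpow_sub _ _ huC, cpow_one]
          ring
  calc mellinFromOne (mconv f h) z
      = ∫ x in Ioi 1, ∫ u in Ioi 1, ((f (x / u) * h u / u : ℝ) : ℂ) * (x : ℂ) ^ (-z - 1) := by
        refine setIntegral_congr_fun measurableSet_Ioi fun x _ => ?_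
        rw [mconv_eq_setIntegral_Ioi hf hh, ← integral_complex_ofReal, integral_mul_const]
    _ = ∫ u in Ioi 1, ∫ x in Ioi 1, ((f (x / u) * h u / u : ℝ) : ℂ) * (x : ℂ) ^ (-z - 1) :=
        integral_integral_swap (integrable_mconv_kernel hfm hfC hhm hhi hz)
    _ = ∫ u in Ioi 1, (h u : ℂ) * (u : ℂ) ^ (-z - 1) * mellinFromOne f z :=
        setIntegral_congr_fun measurableSet_Ioi hinner
    _ = mellinFromOne h z * mellinFromOne f z := integral_mul_const _ _

end Mellin

lemma chi_eq_zero_of_le_one {t : ℝ} (ht : t ≤ 1) : chi t = 0 :=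
  indicator_of_notMem (fun hmem => (ht.trans_lt (Real.one_lt_exp_iff.mpr one_pos)).not_ge hmem.1) _

lemma measurable_chi : Measurable chi :=
  measurable_const.indicator measurableSet_Icc

lemma chi_nonneg (t : ℝ) : 0 ≤ chi t :=
  indicator_nonneg (fun _ _ => zero_le_one) t

lemma abs_chi_le_one (t : ℝ) : |chi t| ≤ 1 := by
  rw [abs_of_nonneg (chi_nonneg t)]
  exact indicator_le_self' (fun _ _ => zero_le_one) t

lemma chi_smul_eq_indicator {E : Type*} [AddCommGroup E] [Module ℝ E] (φ : ℝ → E) :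
    (fun u => chi u • φ u) = (Icc (Real.exp 1) (Real.exp 2)).indicator φ := by
  funext u
  by_cases hu : u ∈ Icc (Real.exp 1) (Real.exp 2) <;> simp [chi, hu]

lemma setIntegral_Ioi_chi_smul {E : Type*} [NormedAddCommGroup E] [NormedSpace ℝ E]
    (φ : ℝ → E) : ∫ u in Ioi 1, chi u • φ u = ∫ u in Real.exp 1..Real.exp 2, φ u := by
  have hsub : Icc (Real.exp 1) (Real.exp 2) ⊆ Ioi 1 := fun t ht =>
    (Real.one_lt_exp_iff.mpr one_pos).trans_le ht.1
  rw [chi_smul_eq_indicator, setIntegral_indicator measurableSet_Icc,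
    inter_eq_self_of_subset_right hsub, integral_Icc_eq_integral_Ioc,
    intervalIntegral.integral_of_le (Real.exp_le_exp.mpr one_le_two)]

lemma chi_div_self_eq_smul : (fun u => chi u / u) = fun u => chi u • u⁻¹ := rfl

lemma integrableOn_chi_div_self : IntegrableOn (fun u => chi u / u) (Ioi 1) := by
  rw [chi_div_self_eq_smul, chi_smul_eq_indicator]
  refine (IntegrableOn.integrable_indicator ?_ measurableSet_Icc).integrableOn
  exact (continuousOn_inv₀.mono fun t ht => ((Real.exp_pos 1).trans_le ht.1).ne')
    |>.integrableOn_compact isCompact_Icc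

lemma integral_chi_div_self : ∫ u in Ioi 1, chi u / u = 1 := by
  rw [chi_div_self_eq_smul, setIntegral_Ioi_chi_smul,
    integral_inv_of_pos (Real.exp_pos 1) (Real.exp_pos 2), ← Real.exp_sub, Real.log_exp]
  norm_num

lemma mellinFromOne_chi {z : ℂ} (hz : z ≠ 0) :
    mellinFromOne chi z = (Complex.exp (-z) - Complex.exp (-2 * z)) / z := by
  have hexp : ∀ a : ℝ, ((Real.exp a : ℝ) : ℂ) ^ (-z) = Complex.exp (-(a * z)) := fun a => by
    rw [cpow_def_of_ne_zero (ofReal_ne_zero.mpr (Real.exp_pos a).ne'),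
      ← ofReal_log (Real.exp_pos a).le, Real.log_exp, mul_neg]
  have hzero : (0:ℝ) ∉ uIcc (Real.exp 1) (Real.exp 2) := fun h0 =>
    (Real.exp_pos 1).not_ge (uIcc_of_le (Real.exp_le_exp.mpr one_le_two) ▸ h0).1
  rw [mellinFromOne]
  simp_rw [← real_smul]
  rw [setIntegral_Ioi_chi_smul,
    integral_cpow (Or.inr ⟨fun h => hz (by linear_combination -h), hzero⟩), sub_add_cancel, hexp,
    hexp]
  push_cast
  rw [div_neg, ← neg_div, neg_sub, one_mul, neg_mul]

lemma chiPow_eq_zero_of_le_one (n : ℕ) {t : ℝ} (ht : t ≤ 1) : chiPow n t = 0 := by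
  induction n generalizing t with
  | zero => exact chi_eq_zero_of_le_one ht
  | succ n ih => exact mconv_eq_zero_of_le_one (fun _ => ih) (fun _ => chi_eq_zero_of_le_one) ht

lemma measurable_chiPow (n : ℕ) : Measurable (chiPow n) := by
  induction n with
  | zero => exact measurable_chi
  | succ n ih =>
    exact measurable_mconv ih (fun _ => chiPow_eq_zero_of_le_one n) measurable_chi
      (fun _ => chi_eq_zero_of_le_one)

lemma chiPow_nonneg (n : ℕ) (t : ℝ) : 0 ≤ chiPow n t := by
  induction n generalizing t with
  | zero => exact chi_nonneg t
  | succ n ih =>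
    exact mconv_nonneg ih (fun _ => chiPow_eq_zero_of_le_one n) chi_nonneg
      (fun _ => chi_eq_zero_of_le_one) t

lemma abs_chiPow_le_one (n : ℕ) (t : ℝ) : |chiPow n t| ≤ 1 := by
  induction n generalizing t with
  | zero => exact abs_chi_le_one t
  | succ n ih =>
    simpa only [chiPow, integral_chi_div_self, mul_one] using
      abs_mconv_le ih (fun _ => chiPow_eq_zero_of_le_one n) chi_nonneg integrableOn_chi_div_self
        (fun _ => chi_eq_zero_of_le_one) t

lemma mellinFromOne_chiPow {z : ℂ} (hz : 0 < z.re) (n : ℕ) :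
    mellinFromOne (chiPow n) z = mellinFromOne chi z ^ (n + 1) := by
  induction n with
  | zero => rw [zero_add, pow_one]; rfl
  | succ n ih =>
    rw [chiPow, mellinFromOne_mconv (measurable_chiPow n) (abs_chiPow_le_one n)
      (fun _ => chiPow_eq_zero_of_le_one n) measurable_chi integrableOn_chi_div_self
      (fun _ => chi_eq_zero_of_le_one) hz, ih, pow_succ' _ (n + 1)]

lemma mellinFromOne_chiPow_div {z : ℂ} (hz : 0 < z.re) (n : ℕ) :
    mellinFromOne (fun u => chiPow n u / (n + 1)) z
      = mellinFromOne chi z ^ (n + 1) / (n + 1) := by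
  rw [mellinFromOne_div_const, mellinFromOne_chiPow hz]
  push_cast
  rfl

lemma norm_mellinFromOne_chi_lt_one {z : ℂ} (hz : 0 < z.re) : ‖mellinFromOne chi z‖ < 1 := by
  refine (norm_mellinFromOne_le chi_nonneg).trans_lt ?_
  set x := z.re
  have hreal : (Complex.exp (-x) - Complex.exp (-2 * x)) / x
      = ((Real.exp (-x) - Real.exp (-2 * x)) / x : ℝ) := by
    push_cast
    ring
  have hsq : Real.exp (-2 * x) = Real.exp (-x) * Real.exp (-x) := by
    rw [← Real.exp_add]
    ring_nf
  have hexp_lt : Real.exp (-x) < 1 := Real.exp_lt_one_iff.mpr (neg_neg_of_pos hz)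
  rw [mellinFromOne_chi (ofReal_ne_zero.mpr hz.ne'), hreal, norm_real, Real.norm_eq_abs,
    abs_lt, lt_div_iff₀ hz, div_lt_one hz, hsq]
  -- `e^{-x} - e^{-2x} = e^{-x} (1 - e^{-x}) ≤ e^{-x} x < x`
  constructor <;> nlinarith [Real.add_one_le_exp (-x), Real.exp_pos (-x)]

theorem hasSum_mellinFromOne_g {z : ℂ} (hz : 0 < z.re) :
    HasSum (fun n : ℕ => mellinFromOne chi z ^ (n + 1) / (n + 1)) (mellinFromOne g z) := by
  have hzre : 0 < (z.re : ℂ).re := by simpa using hz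
  have hsum := Real.hasSum_pow_div_log_of_abs_lt_one
    ((abs_norm _).trans_lt (norm_mellinFromOne_chi_lt_one hzre))
  simp only [← mellinFromOne_chiPow_div hz]
  refine hasSum_mellinFromOne (fun n t => div_nonneg (chiPow_nonneg n t) n.cast_add_one_pos.le)
    (fun n => integrableOn_mellinFromOne_integrand (C := 1) ((measurable_chiPow n).div_const _)
      (fun t => ?_) hz) (hsum.summable.congr fun n => ?_)
  · rw [abs_div, abs_of_pos (n.cast_add_one_pos : (0:ℝ) < n + 1), div_le_one n.cast_add_one_pos]
    exact (abs_chiPow_le_one n t).trans (le_add_of_nonneg_left n.cast_nonneg)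
  · rw [mellinFromOne_chiPow_div hzre, norm_div, norm_pow]
    norm_cast

/-- For `Re z > 0`, `log G(z) = -∫₁^∞ g(u) u^{-z-1} du`, where
`G(z) = 1 - (e^{-z} - e^{-2z})/z`. -/
theorem log_G_repr (z : ℂ) (hz : 0 < z.re) :
    Complex.log (1 - (Complex.exp (-z) - Complex.exp (-2 * z)) / z)
      = -∫ u in Set.Ioi (1:ℝ), (g u : ℂ) * (u : ℂ) ^ (-z - 1) := by
  change _ = -mellinFromOne g z
  rw [← mellinFromOne_chi fun h => by simp [h] at hz,
    ← (hasSum_taylorSeries_neg_log' (norm_mellinFromOne_chi_lt_one hz)).unique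
      (hasSum_mellinFromOne_g hz), neg_neg]
end

section
/- Let β ∈ (0,1). If a Beurling system satisfies ψ(x) - x = Ω(x exp(-c''(log x)^{β/(β+1)})) with ψ(x) = ∫₁^x log u dΠ(u) and π(x) = ∫₁^x (1/log u) dψ(u) + O(√x), then π(x) - Li(x) = Ω(x exp(-c(log x)^{β/(β+1)})) for every c > c''. More precisely: if π(x) = Li(x) + O(x exp(-c(log x)^{β/(β+1)})) for some c > c'', then ψ(x) = x + O(x exp(-c'(log x)^{β/(β+1)})) for every c' < c, contradicting the Ω-bound. -/
open Filter Asymptotics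

/-!
For a measure `ν` on `ℝ` that is finite on `(1, x]`, Fubini gives the partial summation
formula `∫_{(1,x]} log u dν = ν(1,x] log x - ∫₁ˣ ν(1,t] dt/t`. Applied to `dΠ` and to `dLi`,
for which `∫_{(1,x]} log u dLi = x - 1 - log x`, it yields, with `D = Π - Li`,
`ψ(x) - x = D(x) log x - ∫₁ˣ D(t) dt/t - 1 - log x`.
If `π - Li = o(x exp(-c (log x)^θ))` with `θ = β/(β+1)`, then `D = O(x exp(-c (log x)^θ))`
because `π = Π + O(√x)`. Splitting the integral at `x^δ`, with `δ < 1` so close to `1` that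
`c δ^θ > c''`, makes every term `o(x exp(-c'' (log x)^θ))`, against the hypothesis on `ψ - x`.
-/

section

open MeasureTheory Set Topology Real

theorem lintegral_Ico_inv {a b : ℝ} (ha : 0 < a) (hab : a ≤ b) :
    ∫⁻ t in Ico a b, ENNReal.ofReal t⁻¹ = ENNReal.ofReal (log b - log a) := by
  rw [← ofReal_integral_eq_lintegral_ofReal]
  · rw [integral_Ico_eq_integral_Ioo, ← integral_Ioc_eq_integral_Ioo,
      ← intervalIntegral.integral_of_le hab, integral_inv_of_pos ha (ha.trans_le hab),
      log_div (ha.trans_le hab).ne' ha.ne']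
  · exact (ContinuousOn.integrableOn_Icc (continuousOn_inv₀.mono fun t ht =>
      (ha.trans_le ht.1).ne')).mono_set Ico_subset_Icc_self
  · filter_upwards [ae_restrict_mem measurableSet_Ico] with t ht
    exact (inv_pos.2 (ha.trans_le ht.1)).le

variable {μ : Measure ℝ} {x : ℝ}

theorem lintegral_log_sub_log [SFinite μ] :
    ∫⁻ u in Ioc 1 x, ENNReal.ofReal (log x - log u) ∂μ
      = ∫⁻ t in Ico 1 x, ENNReal.ofReal t⁻¹ * μ (Ioc 1 t) := by
  let k : ℝ → ℝ → ENNReal := fun u t => if u ≤ t then ENNReal.ofReal t⁻¹ else 0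
  have hk : Measurable (Function.uncurry k) :=
    Measurable.ite (measurableSet_le measurable_fst measurable_snd)
      (measurable_snd.inv.ennreal_ofReal) measurable_const
  calc ∫⁻ u in Ioc 1 x, ENNReal.ofReal (log x - log u) ∂μ
      = ∫⁻ u in Ioc 1 x, (∫⁻ t in Ico 1 x, k u t) ∂μ := by
        refine setLIntegral_congr_fun measurableSet_Ioc fun u hu => ?_
        have hk_u : k u = (Ici u).indicator fun t => ENNReal.ofReal t⁻¹ := by
          ext t; simp [k, indicator_apply]
        have hIco : Ici u ∩ Ico 1 x = Ico u x :=
          Set.ext fun t => ⟨fun h => ⟨h.1, h.2.2⟩, fun h => ⟨h.1, hu.1.le.trans h.1, h.2⟩⟩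
        rw [hk_u, lintegral_indicator measurableSet_Ici,
          Measure.restrict_restrict measurableSet_Ici, hIco,
          lintegral_Ico_inv (one_pos.trans hu.1) hu.2]
    _ = ∫⁻ t in Ico 1 x, ∫⁻ u in Ioc 1 x, k u t ∂μ :=
        lintegral_lintegral_swap (μ := μ.restrict (Ioc 1 x)) (ν := volume.restrict (Ico 1 x))
          hk.aemeasurable
    _ = ∫⁻ t in Ico 1 x, ENNReal.ofReal t⁻¹ * μ (Ioc 1 t) := by
        refine setLIntegral_congr_fun measurableSet_Ico fun t ht => ?_
        have hk_t : (fun u => k u t) = (Iic t).indicator fun _ => ENNReal.ofReal t⁻¹ := by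
          ext u; simp [k, indicator_apply]
        rw [hk_t, lintegral_indicator measurableSet_Iic,
          Measure.restrict_restrict measurableSet_Iic, setLIntegral_const,
          Iic_inter_Ioc_of_le ht.2.le]

theorem measureReal_Ioc_div_nonneg_le (hμ : μ (Ioc 1 x) ≠ ⊤) {t : ℝ} (ht : t ∈ Ico 1 x) :
    0 ≤ μ.real (Ioc 1 t) / t ∧ μ.real (Ioc 1 t) / t ≤ μ.real (Ioc 1 x) := by
  have hle : μ.real (Ioc 1 t) ≤ μ.real (Ioc 1 x) :=
    measureReal_mono (Ioc_subset_Ioc_right ht.2.le) hμ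
  exact ⟨div_nonneg measureReal_nonneg (zero_le_one.trans ht.1),
    (div_le_self measureReal_nonneg ht.1).trans hle⟩

theorem integrableOn_measureReal_Ioc_div (hμ : μ (Ioc 1 x) ≠ ⊤) :
    IntegrableOn (fun t => μ.real (Ioc 1 t) / t) (Ico 1 x) := by
  have hmono : MonotoneOn (fun t => μ.real (Ioc 1 t)) (Ico 1 x) := fun s _ t ht hst =>
    measureReal_mono (Ioc_subset_Ioc_right hst)
      (ne_top_of_le_ne_top hμ (measure_mono (Ioc_subset_Ioc_right ht.2.le)))
  refine Integrable.of_bound ((aemeasurable_restrict_of_monotoneOn measurableSet_Ico hmono).div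
      measurable_id.aemeasurable).aestronglyMeasurable (μ.real (Ioc 1 x)) ?_
  filter_upwards [ae_restrict_mem measurableSet_Ico] with t ht
  obtain ⟨h0, h1⟩ := measureReal_Ioc_div_nonneg_le hμ ht
  rwa [Real.norm_of_nonneg h0]

theorem integral_log_eq_mul_log_sub [SFinite μ] (hμ : μ (Ioc 1 x) ≠ ⊤) :
    ∫ u in Ioc 1 x, log u ∂μ
      = μ.real (Ioc 1 x) * log x - ∫ t in Ico 1 x, μ.real (Ioc 1 t) / t := by
  have := isFiniteMeasure_restrict.2 hμ
  have hlog : IntegrableOn log (Ioc 1 x) μ := by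
    refine Integrable.of_bound measurable_log.aestronglyMeasurable (log x) ?_
    filter_upwards [ae_restrict_mem measurableSet_Ioc] with u hu
    rw [Real.norm_of_nonneg (log_nonneg hu.1.le)]
    exact log_le_log (one_pos.trans hu.1) hu.2
  have hswap : ∫ u in Ioc 1 x, (log x - log u) ∂μ = ∫ t in Ico 1 x, μ.real (Ioc 1 t) / t := by
    rw [integral_eq_lintegral_of_nonneg_ae, integral_eq_lintegral_of_nonneg_ae,
      lintegral_log_sub_log]
    · congr 1
      refine setLIntegral_congr_fun measurableSet_Ico fun t ht => ?_
      rw [div_eq_inv_mul, ENNReal.ofReal_mul (inv_nonneg.2 (zero_le_one.trans ht.1)),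
        measureReal_def, ENNReal.ofReal_toReal
          (ne_top_of_le_ne_top hμ (measure_mono (Ioc_subset_Ioc_right ht.2.le)))]
    · filter_upwards [ae_restrict_mem measurableSet_Ico] with t ht
      exact (measureReal_Ioc_div_nonneg_le hμ ht).1
    · exact (integrableOn_measureReal_Ioc_div hμ).aestronglyMeasurable
    · filter_upwards [ae_restrict_mem measurableSet_Ioc] with u hu
      exact sub_nonneg.2 (log_le_log (one_pos.trans hu.1) hu.2)
    · exact (measurable_const.sub measurable_log).aestronglyMeasurable
  rw [← hswap, integral_sub (integrable_const (log x)) hlog, setIntegral_const, smul_eq_mul]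
  ring

theorem setIntegral_inv_log_mul_log :
    ∫ u in Ioc 1 x, (log u)⁻¹ * log u ∂μ = μ.real (Ioc 1 x) := by
  rw [setIntegral_congr_fun measurableSet_Ioc (g := fun _ => 1)
    fun u hu => inv_mul_cancel₀ (log_pos hu.1).ne', setIntegral_const, smul_eq_mul, mul_one]

-- `Li'` clipped at `0`; only the restriction to `(1, ∞)`, where `Li' ≥ 0`, matters.
noncomputable def liMeasure : Measure ℝ :=
  volume.withDensity fun u => ((1 - u⁻¹) / log u).toNNReal

instance : SFinite liMeasure := by
  unfold liMeasure
  infer_instance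

theorem one_sub_inv_div_log_mem_Icc {u : ℝ} (hu : 1 < u) : (1 - u⁻¹) / log u ∈ Icc 0 1 := by
  have hlog := log_pos hu
  refine ⟨div_nonneg (sub_nonneg.2 (inv_le_one_of_one_le₀ hu.le)) hlog.le, ?_⟩
  rw [div_le_one hlog]
  exact one_sub_inv_le_log_of_pos (one_pos.trans hu)

theorem setIntegral_liMeasure (g : ℝ → ℝ) :
    ∫ u in Ioc 1 x, g u ∂liMeasure = ∫ u in Ioc 1 x, (1 - u⁻¹) / log u * g u := by
  rw [liMeasure, setIntegral_withDensity_eq_setIntegral_smul (by fun_prop) g measurableSet_Ioc]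
  refine setIntegral_congr_fun measurableSet_Ioc fun u hu => ?_
  rw [NNReal.smul_def, Real.coe_toNNReal _ (one_sub_inv_div_log_mem_Icc hu.1).1, smul_eq_mul]

theorem liMeasure_Ioc_lt_top : liMeasure (Ioc 1 x) < ⊤ := by
  rw [liMeasure, withDensity_apply _ measurableSet_Ioc]
  refine (setLIntegral_mono' measurableSet_Ioc fun u hu => ?_).trans_lt
    ((setLIntegral_one _).trans_lt measure_Ioc_lt_top)
  exact ENNReal.coe_le_one_iff.2 (Real.toNNReal_le_one.2 (one_sub_inv_div_log_mem_Icc hu.1).2)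

theorem liMeasure_real_Ioc (hx : 1 ≤ x) :
    liMeasure.real (Ioc 1 x) = ∫ u in (1:ℝ)..x, (1 - u⁻¹) / log u := by
  simpa [intervalIntegral.integral_of_le hx] using setIntegral_liMeasure (fun _ => 1) (x := x)

theorem integral_log_liMeasure (hx : 1 ≤ x) :
    ∫ u in Ioc 1 x, log u ∂liMeasure = x - 1 - log x := by
  have hinv : IntervalIntegrable (fun u : ℝ => u⁻¹) volume 1 x :=
    intervalIntegral.intervalIntegrable_inv
      (fun t ht => (one_pos.trans_le (by simpa [hx] using ht.1)).ne') continuousOn_id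
  rw [setIntegral_liMeasure, setIntegral_congr_fun measurableSet_Ioc
      (g := fun u => 1 - u⁻¹) fun u hu => div_mul_cancel₀ _ (log_pos hu.1).ne',
    ← intervalIntegral.integral_of_le hx,
    intervalIntegral.integral_sub intervalIntegrable_const hinv,
    integral_inv_of_pos one_pos (one_pos.trans_le hx), div_one]
  simp

noncomputable def liRemainder (μ : Measure ℝ) (t : ℝ) : ℝ :=
  μ.real (Ioc 1 t) - liMeasure.real (Ioc 1 t)

theorem integrableOn_liRemainder_div (hμ : μ (Ioc 1 x) ≠ ⊤) :
    IntegrableOn (fun t => liRemainder μ t / t) (Ico 1 x) := by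
  simp_rw [liRemainder, sub_div]
  exact (integrableOn_measureReal_Ioc_div hμ).sub
    (integrableOn_measureReal_Ioc_div liMeasure_Ioc_lt_top.ne)

theorem integral_log_sub_self_eq [SFinite μ] (hx : 1 ≤ x) (hμ : μ (Ioc 1 x) ≠ ⊤) :
    ∫ u in Ioc 1 x, log u ∂μ - x
      = liRemainder μ x * log x - (∫ t in Ico 1 x, liRemainder μ t / t) - (1 + log x) := by
  have hLi : liMeasure (Ioc 1 x) ≠ ⊤ := liMeasure_Ioc_lt_top.ne
  have hLi_log := integral_log_eq_mul_log_sub hLi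
  rw [integral_log_liMeasure hx] at hLi_log
  have hsplit : ∫ t in Ico 1 x, liRemainder μ t / t
      = (∫ t in Ico 1 x, μ.real (Ioc 1 t) / t)
        - ∫ t in Ico 1 x, liMeasure.real (Ioc 1 t) / t := by
    rw [← integral_sub (integrableOn_measureReal_Ioc_div hμ)
      (integrableOn_measureReal_Ioc_div hLi)]
    simp_rw [liRemainder, sub_div]
  rw [hsplit, integral_log_eq_mul_log_sub hμ, liRemainder]
  linarith

noncomputable def errorTerm (θ c x : ℝ) : ℝ := x * exp (-c * log x ^ θ)

theorem tendsto_mul_sub_mul_rpow_atTop {a θ : ℝ} (c : ℝ) (ha : 0 < a) (hθ : θ < 1) :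
    Tendsto (fun s : ℝ => a * s - c * s ^ θ) atTop atTop := by
  have hrpow : (fun s : ℝ => s ^ θ) =o[atTop] fun s => s := by
    refine isLittleO_of_tendsto' ((eventually_gt_atTop 0).mono fun s hs h => (hs.ne' h).elim)
      ((tendsto_rpow_neg_atTop (sub_pos.2 hθ)).congr' ?_)
    filter_upwards [eventually_gt_atTop 0] with s hs
    rw [neg_sub, rpow_sub hs, rpow_one]
  have hequiv : (fun s => a * s + -(c * s ^ θ)) ~[atTop] fun s => a * s :=
    IsEquivalent.refl.add_isLittleO
      ((hrpow.const_mul_left c).neg_left.trans_isBigO (isBigO_self_const_mul ha.ne' _ _))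
  simpa [sub_eq_add_neg] using hequiv.symm.tendsto_atTop (tendsto_id.const_mul_atTop ha)

variable {θ : ℝ}

theorem rpow_isLittleO_errorTerm (hθ : θ < 1) {ρ : ℝ} (hρ : ρ < 1) (c : ℝ) :
    (fun x => x ^ ρ) =o[atTop] errorTerm θ c := by
  have hexp : (fun x => exp (log x * ρ)) =o[atTop] fun x => exp (log x - c * log x ^ θ) := by
    refine isLittleO_exp_comp_exp_comp.2 (((tendsto_mul_sub_mul_rpow_atTop c
      (sub_pos.2 hρ) hθ).comp tendsto_log_atTop).congr fun x => ?_)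
    simp only [Function.comp_apply]
    ring
  refine hexp.congr' ?_ ?_ <;> filter_upwards [eventually_gt_atTop 0] with x hx
  · rw [rpow_def_of_pos hx]
  · rw [errorTerm, exp_sub, exp_log hx, neg_mul, exp_neg, div_eq_mul_inv]

theorem errorTerm_mul_log_rpow_isLittleO (hθ : 0 < θ) (k : ℝ) {c c' : ℝ} (hc : c' < c) :
    (fun x => errorTerm θ c x * log x ^ k) =o[atTop] errorTerm θ c' := by
  have hlim : Tendsto (fun x => log x ^ k * exp (-(c - c') * log x ^ θ)) atTop (𝓝 0) := by
    refine ((tendsto_rpow_mul_exp_neg_mul_atTop_nhds_zero (k / θ) _ (sub_pos.2 hc)).comp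
      ((tendsto_rpow_atTop hθ).comp tendsto_log_atTop)).congr' ?_
    filter_upwards [eventually_ge_atTop 1] with x hx
    simp only [Function.comp_apply]
    rw [← rpow_mul (log_nonneg hx), mul_div_cancel₀ _ hθ.ne']
  refine (((isLittleO_one_iff ℝ).2 hlim).mul_isBigO (isBigO_refl (errorTerm θ c') _)).congr
    (fun x => ?_) fun x => one_mul _
  rw [errorTerm, errorTerm, mul_mul_mul_comm, ← exp_add]
  ring_nf

theorem errorTerm_isLittleO (hθ : 0 < θ) {c c' : ℝ} (hc : c' < c) :
    errorTerm θ c =o[atTop] errorTerm θ c' := by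
  simpa using errorTerm_mul_log_rpow_isLittleO hθ 0 hc

theorem exists_lt_mul_rpow (hθ : 0 < θ) {c c' : ℝ} (hc : c' < c) :
    ∃ δ ∈ Ioo (0:ℝ) 1, c' < c * δ ^ θ := by
  have hlim : Tendsto (fun δ : ℝ => c * δ ^ θ) (𝓝[<] 1) (𝓝 c) := by
    simpa using (((continuous_rpow_const hθ.le).tendsto 1).const_mul c).mono_left
      nhdsWithin_le_nhds
  exact (Eventually.and (Ioo_mem_nhdsLT zero_lt_one) (hlim.eventually (lt_mem_nhds hc))).exists

theorem norm_setIntegral_Ico_le_of_split {f : ℝ → ℝ} {a y x A B : ℝ} (hay : a ≤ y) (hyx : y ≤ x)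
    (hf : IntegrableOn f (Ico a x)) (hA : ∀ t ∈ Ico a y, ‖f t‖ ≤ A)
    (hB : ∀ t ∈ Ico y x, ‖f t‖ ≤ B) :
    ‖∫ t in Ico a x, f t‖ ≤ A * (y - a) + B * (x - y) := by
  rw [← Ico_union_Ico_eq_Ico hay hyx, setIntegral_union Ico_disjoint_Ico_same measurableSet_Ico
    (hf.mono_set (Ico_subset_Ico_right hyx)) (hf.mono_set (Ico_subset_Ico_left hay))]
  refine (norm_add_le _ _).trans (add_le_add ?_ ?_)
  · simpa [Real.volume_real_Ico_of_le hay] using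
      norm_setIntegral_le_of_norm_le_const (μ := volume) measure_Ico_lt_top hA
  · simpa [Real.volume_real_Ico_of_le hyx] using
      norm_setIntegral_le_of_norm_le_const (μ := volume) measure_Ico_lt_top hB

theorem exp_neg_mul_log_rpow_le_of_le (hθ : 0 ≤ θ) {c y t : ℝ} (hc : 0 ≤ c) (hy : 1 ≤ y)
    (hyt : y ≤ t) : exp (-c * log t ^ θ) ≤ exp (-c * log y ^ θ) := by
  have hlog : log y ^ θ ≤ log t ^ θ :=
    rpow_le_rpow (log_nonneg hy) (log_le_log (one_pos.trans_le hy) hyt) hθ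
  simpa only [neg_mul, exp_le_exp, neg_le_neg_iff] using mul_le_mul_of_nonneg_left hlog hc

theorem norm_setIntegral_Ico_div_le (hθ : 0 ≤ θ) {D : ℝ → ℝ} {c δ M x₀ x : ℝ} (hc : 0 ≤ c)
    (hδ : 0 ≤ δ) (hM : 0 ≤ M) (hx₀ : 1 ≤ x₀) (hx₀x : x₀ ≤ x ^ δ) (hδx : x ^ δ ≤ x)
    (hint : IntegrableOn (fun t => D t / t) (Ico 1 x))
    (hD : ∀ t, x₀ ≤ t → ‖D t / t‖ ≤ M * exp (-c * log t ^ θ)) :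
    ‖∫ t in Ico 1 x, D t / t‖
      ≤ (‖∫ t in Ico 1 x₀, D t / t‖ + M) * x ^ δ + M * errorTerm θ (c * δ ^ θ) x := by
  have hy : 1 ≤ x ^ δ := hx₀.trans hx₀x
  have hx : 0 < x := one_pos.trans_le (hy.trans hδx)
  have hlog_y : log (x ^ δ) ^ θ = δ ^ θ * log x ^ θ := by
    rw [log_rpow hx, mul_rpow hδ (log_nonneg (hy.trans hδx))]
  have hsplit := norm_setIntegral_Ico_le_of_split hx₀x hδx
    (hint.mono_set (Ico_subset_Ico_left hx₀))
    (A := M) (B := M * exp (-(c * δ ^ θ) * log x ^ θ))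
    (fun t ht => (hD t ht.1).trans (mul_le_of_le_one_right hM (exp_le_one_iff.2 (by
      have := rpow_nonneg (log_nonneg (hx₀.trans ht.1)) θ
      nlinarith))))
    (fun t ht => (hD t (hx₀x.trans ht.1)).trans (mul_le_mul_of_nonneg_left (by
      simpa only [hlog_y, mul_assoc, neg_mul] using
        exp_neg_mul_log_rpow_le_of_le hθ hc hy ht.1) hM))
  rw [← Ico_union_Ico_eq_Ico hx₀ (hx₀x.trans hδx), setIntegral_union Ico_disjoint_Ico_same
    measurableSet_Ico (hint.mono_set (Ico_subset_Ico_right (hx₀x.trans hδx)))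
    (hint.mono_set (Ico_subset_Ico_left hx₀))]
  have hI := norm_nonneg (∫ t in Ico 1 x₀, D t / t)
  have he := exp_pos (-(c * δ ^ θ) * log x ^ θ)
  refine (norm_add_le _ _).trans ?_
  rw [errorTerm]
  nlinarith [mul_nonneg hM he.le]

theorem setIntegral_Ico_div_isLittleO (hθ0 : 0 < θ) (hθ1 : θ < 1) {c c' : ℝ} (hc0 : 0 ≤ c)
    (hc : c' < c) {D : ℝ → ℝ} (hint : ∀ x, IntegrableOn (fun t => D t / t) (Ico 1 x))
    (hD : D =O[atTop] errorTerm θ c) :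
    (fun x => ∫ t in Ico 1 x, D t / t) =o[atTop] errorTerm θ c' := by
  obtain ⟨δ, ⟨hδ0, hδ1⟩, hcδ⟩ := exists_lt_mul_rpow hθ0 hc
  obtain ⟨M, hM0, hM⟩ := hD.exists_pos
  obtain ⟨x₀, hx₀⟩ := eventually_atTop.1 hM.bound
  set x₁ := max x₀ 1
  have hDt : ∀ t, x₁ ≤ t → ‖D t / t‖ ≤ M * exp (-c * log t ^ θ) := by
    intro t ht
    have ht0 : 0 < t := one_pos.trans_le (le_of_max_le_right ht)
    rw [norm_div, Real.norm_of_nonneg ht0.le, div_le_iff₀ ht0]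
    simpa [errorTerm, abs_of_pos ht0, mul_assoc, mul_comm t] using hx₀ t (le_of_max_le_left ht)
  refine IsBigO.trans_isLittleO (IsBigO.of_bound 1 ?_)
    (((rpow_isLittleO_errorTerm hθ1 hδ1 c').const_mul_left (‖∫ t in Ico 1 x₁, D t / t‖ + M)).add
      ((errorTerm_isLittleO hθ0 hcδ).const_mul_left M))
  filter_upwards [eventually_ge_atTop 1, (tendsto_rpow_atTop hδ0).eventually_ge_atTop x₁]
    with x hx hxδ
  rw [one_mul]
  exact (norm_setIntegral_Ico_div_le hθ0.le hc0 hδ0.le hM0.le (le_max_right _ _) hxδ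
    (rpow_le_self_of_one_le hx hδ1.le) (hint x) hDt).trans (le_abs_self _)

theorem mul_log_sub_setIntegral_isLittleO (hθ0 : 0 < θ) (hθ1 : θ < 1) {c c' : ℝ} (hc0 : 0 ≤ c)
    (hc : c' < c) {D : ℝ → ℝ} (hint : ∀ x, IntegrableOn (fun t => D t / t) (Ico 1 x))
    (hD : D =O[atTop] errorTerm θ c) :
    (fun x => D x * log x - (∫ t in Ico 1 x, D t / t) - (1 + log x)) =o[atTop] errorTerm θ c' := by
  have hlog : (fun x => errorTerm θ c x * log x) =o[atTop] errorTerm θ c' := by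
    simpa using errorTerm_mul_log_rpow_isLittleO hθ0 1 hc
  have hconst : (fun _ => (1 : ℝ)) =o[atTop] errorTerm θ c' := by
    simpa using rpow_isLittleO_errorTerm hθ1 zero_lt_one c'
  have hone : (fun x => 1 + log x) =o[atTop] errorTerm θ c' :=
    hconst.add ((isLittleO_log_rpow_atTop one_half_pos).trans
      (rpow_isLittleO_errorTerm hθ1 one_half_lt_one c'))
  exact (((hD.mul (isBigO_refl log atTop)).trans_isLittleO hlog).sub
    (setIntegral_Ico_div_isLittleO hθ0 hθ1 hc0 hc hint hD)).sub hone

end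

theorem pi_omega_general (β c'' : ℝ) (hβ : β ∈ Set.Ioo (0:ℝ) 1) (hc'' : 0 < c'')
    (P : StieltjesFunction ℝ)
    (ψ π : ℝ → ℝ)
    (hψ : ∀ x : ℝ, ψ x = ∫ u in Set.Ioc (1:ℝ) x, Real.log u ∂P.measure)
    (hπ : ∃ C > 0, ∀ x : ℝ, 1 ≤ x →
      |π x - ∫ u in Set.Ioc (1:ℝ) x, (Real.log u)⁻¹ * Real.log u ∂P.measure|
        ≤ C * Real.sqrt x)
    (hΩ : ¬ (fun x : ℝ => ψ x - x) =o[atTop]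
        fun x : ℝ => x * Real.exp (-c'' * Real.log x ^ (β / (β + 1)))) :
    ∀ c : ℝ, c'' < c →
      ¬ (fun x : ℝ => π x - ∫ u in (1:ℝ)..x, (1 - u⁻¹) / Real.log u) =o[atTop]
        fun x : ℝ => x * Real.exp (-c * Real.log x ^ (β / (β + 1))) := by
  intro c hc hπLi
  have hθ0 : 0 < β / (β + 1) := div_pos hβ.1 (by linarith [hβ.1])
  have hθ1 : β / (β + 1) < 1 := (div_lt_one (by linarith [hβ.1])).2 (lt_add_one β)
  have hπP : (fun x => π x - P.measure.real (Set.Ioc 1 x)) =O[atTop]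
      fun x => x ^ (1 / 2 : ℝ) := by
    obtain ⟨C, -, hC⟩ := hπ
    refine IsBigO.of_bound C ?_
    filter_upwards [eventually_ge_atTop 1] with x hx
    rw [← setIntegral_inv_log_mul_log, Real.norm_eq_abs, Real.norm_of_nonneg (by positivity),
      ← Real.sqrt_eq_rpow]
    exact hC x hx
  have hD : liRemainder P.measure =O[atTop] errorTerm (β / (β + 1)) c := by
    refine (hπLi.sub (hπP.trans_isLittleO (rpow_isLittleO_errorTerm hθ1 one_half_lt_one c))
      ).isBigO.congr' ?_ EventuallyEq.rfl
    filter_upwards [eventually_ge_atTop 1] with x hx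
    rw [liRemainder, liMeasure_real_Ioc hx]
    ring
  refine hΩ ((mul_log_sub_setIntegral_isLittleO hθ0 hθ1 (hc''.trans hc).le hc
    (fun x => integrableOn_liRemainder_div measure_Ioc_lt_top.ne) hD).congr' ?_ EventuallyEq.rfl)
  filter_upwards [eventually_ge_atTop 1] with x hx
  rw [hψ, integral_log_sub_self_eq hx measure_Ioc_lt_top.ne]

/-- Let `Π` be a nondecreasing right-continuous function with `Π(1) = 0` satisfying the
Chebyshev bound `Π(x) ≪ x/log x`, let `ψ(x) = ∫₁^x log u dΠ(u)`, and let
`π(x) = ∫₁^x (1/log u) dψ(u) + O(√x)`.  If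
`ψ(x) - x = Ω(x exp(-c'' (log x)^{β/(β+1)}))`, then for every `c > c''`,
`π(x) - Li(x) = Ω(x exp(-c (log x)^{β/(β+1)}))`, where `Li(x) = ∫₁^x (1-u⁻¹)/log u du`. -/
theorem pi_omega (β c'' : ℝ) (hβ : β ∈ Set.Ioo (0:ℝ) 1) (hc'' : 0 < c'')
    (P : StieltjesFunction ℝ) (hP1 : P 1 = 0)
    (hcheb : ∃ C > 0, ∀ x : ℝ, 2 ≤ x → P x ≤ C * x / Real.log x)
    (ψ π : ℝ → ℝ)
    (hψ : ∀ x : ℝ, ψ x = ∫ u in Set.Ioc (1:ℝ) x, Real.log u ∂P.measure)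
    (hπ : ∃ C > 0, ∀ x : ℝ, 1 ≤ x →
      |π x - ∫ u in Set.Ioc (1:ℝ) x, (Real.log u)⁻¹ * Real.log u ∂P.measure|
        ≤ C * Real.sqrt x)
    (hΩ : ¬ (fun x : ℝ => ψ x - x) =o[atTop]
        fun x : ℝ => x * Real.exp (-c'' * Real.log x ^ (β / (β + 1)))) :
    ∀ c : ℝ, c'' < c →
      ¬ (fun x : ℝ => π x - ∫ u in (1:ℝ)..x, (1 - u⁻¹) / Real.log u) =o[atTop]
        fun x : ℝ => x * Real.exp (-c * Real.log x ^ (β / (β + 1))) :=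
  pi_omega_general β c'' hβ hc'' P ψ π hψ hπ hΩ
end
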